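/- Let b : X × Y → ℂ be a bilinear form on finite-dimensional spaces X, Y with dim X = dim Y satisfying inf_{0≠y∈Y} sup_{0≠x∈X} |b(x,y)|/(‖x‖‖y‖) ≥ c > 0. Then for every linear functional ℓ on X there exists a unique y ∈ Y with b(x,y) = ℓ(x) for all x ∈ X, and ‖y‖ ≤ c⁻¹ ‖ℓ‖. -/

import Mathlib

/-!
The inf-sup condition says exactly that `y ↦ b(·, y)`, a linear map from `Y` to the dual of `X`,
is bounded below by `c`. Bounded below forces injectivity, and an injective linear map between
spaces of the same finite dimension is bijective; the lower bound then also controls the norm of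
the preimage of `ℓ`.
-/

open Module

lemma ContinuousLinearMap.iSup_norm_apply_le_opNorm {𝕜 E F : Type*} [NontriviallyNormedField 𝕜]
    [SeminormedAddCommGroup E] [NormedSpace 𝕜 E] [SeminormedAddCommGroup F] [NormedSpace 𝕜 F]
    (f : E →L[𝕜] F) : ⨆ x : {x : E // ‖x‖ ≤ 1}, ‖f x‖ ≤ ‖f‖ := by
  have : Nonempty {x : E // ‖x‖ ≤ 1} := ⟨⟨0, by simp⟩⟩
  exact ciSup_le fun x => by simpa using f.le_opNorm_of_le x.2

lemma finrank_continuousLinearMap_self {𝕜 E : Type*} [NontriviallyNormedField 𝕜] [CompleteSpace 𝕜]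
    [NormedAddCommGroup E] [NormedSpace 𝕜 E] [FiniteDimensional 𝕜 E] :
    finrank 𝕜 (E →L[𝕜] 𝕜) = finrank 𝕜 E := by
  rw [← (LinearMap.toContinuousLinearMap : (E →ₗ[𝕜] 𝕜) ≃ₗ[𝕜] (E →L[𝕜] 𝕜)).finrank_eq,
    finrank_linearMap, finrank_self, mul_one]

section BoundedBelow

variable {𝕜 E F : Type*} [NormedField 𝕜] [NormedAddCommGroup E] [NormedSpace 𝕜 E]
  [NormedAddCommGroup F] [NormedSpace 𝕜 F] {T : E →ₗ[𝕜] F} {c : ℝ}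

lemma LinearMap.injective_of_mul_norm_le_norm (hc : 0 < c) (hT : ∀ x, c * ‖x‖ ≤ ‖T x‖) :
    Function.Injective T := by
  rw [← LinearMap.ker_eq_bot, LinearMap.ker_eq_bot']
  intro x hx
  have := hT x
  rw [hx, norm_zero] at this
  exact norm_eq_zero.mp (le_antisymm (nonpos_of_mul_nonpos_right this hc) (norm_nonneg x))

lemma LinearMap.exists_unique_preimage_of_mul_norm_le_norm [FiniteDimensional 𝕜 E]
    [FiniteDimensional 𝕜 F] (hdim : finrank 𝕜 E = finrank 𝕜 F) (hc : 0 < c)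
    (hT : ∀ x, c * ‖x‖ ≤ ‖T x‖) (z : F) :
    ∃ x, T x = z ∧ ‖x‖ ≤ c⁻¹ * ‖z‖ ∧ ∀ x', T x' = z → x' = x := by
  have hinj := T.injective_of_mul_norm_le_norm hc hT
  obtain ⟨x, rfl⟩ := (T.injective_iff_surjective_of_finrank_eq_finrank hdim).mp hinj z
  refine ⟨x, rfl, ?_, fun x' hx' => hinj hx'⟩
  rw [inv_mul_eq_div, le_div_iff₀ hc, mul_comm]
  exact hT x

end BoundedBelow

/-- Discrete Babuška–Lax–Milgram: if `b : X × Y → ℂ` on finite-dimensional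
spaces of equal dimension satisfies the inf-sup condition
`sup_{‖x‖≤1} |b(x,y)| ≥ c ‖y‖` for all `y`, with `c > 0`, then for every
linear functional `ℓ` on `X` there is a unique `y ∈ Y` with `b(x,y) = ℓ(x)`
for all `x`, and it satisfies `‖y‖ ≤ c⁻¹ ‖ℓ‖`. -/
theorem infSup_solvability
    {X Y : Type*} [NormedAddCommGroup X] [NormedSpace ℂ X]
    [NormedAddCommGroup Y] [NormedSpace ℂ Y]
    [FiniteDimensional ℂ X] [FiniteDimensional ℂ Y]
    (hdim : Module.finrank ℂ X = Module.finrank ℂ Y)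
    (b : X →L[ℂ] Y →L[ℂ] ℂ) (c : ℝ) (hc : 0 < c)
    (hinfsup : ∀ y : Y, c * ‖y‖ ≤ ⨆ x : {x : X // ‖x‖ ≤ 1}, ‖b x.1 y‖)
    (ℓ : X →L[ℂ] ℂ) :
    ∃ y : Y, (∀ x : X, b x y = ℓ x) ∧ ‖y‖ ≤ c⁻¹ * ‖ℓ‖ ∧
      ∀ y' : Y, (∀ x : X, b x y' = ℓ x) → y' = y := by
  have hbound : ∀ y, c * ‖y‖ ≤ ‖b.flip y‖ := fun y =>
    (hinfsup y).trans (b.flip y).iSup_norm_apply_le_opNorm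
  have hdim' : finrank ℂ Y = finrank ℂ (X →L[ℂ] ℂ) := by
    rw [finrank_continuousLinearMap_self, hdim]
  obtain ⟨y, hy, hnorm, huniq⟩ :=
    b.flip.toLinearMap.exists_unique_preimage_of_mul_norm_le_norm hdim' hc hbound ℓ
  exact ⟨y, fun x => DFunLike.congr_fun hy x, hnorm,
    fun y' hy' => huniq y' (ContinuousLinearMap.ext hy')⟩
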